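/- arXiv:2505.12972 — 8 statements merged into one kernel-verified Lean document; each statement's English description precedes it below -/
import Mathlib

section
/- Weak centering is valid: for every model (S, U), if the counterfactual φ □→ ψ holds at (S, U) and S satisfies φ, then S satisfies ψ. -/
/-- Propositional formulas over atoms of type `α`. -/
inductive PForm (α : Type) : Type
  | atom (a : α) : PForm α
  | top : PForm α
  | neg (φ : PForm α) : PForm α
  | conj (φ ψ : PForm α) : PForm α
  | biimp (φ ψ : PForm α) : PForm α

/-- Truth of a propositional formula in a valuation `V`. -/
def PForm.eval {α : Type} (V : Set α) : PForm α → Prop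
  | .atom a => a ∈ V
  | .top => True
  | .neg φ => ¬ φ.eval V
  | .conj φ ψ => φ.eval V ∧ ψ.eval V
  | .biimp φ ψ => (φ.eval V ↔ ψ.eval V)

/-- A state: a causal base together with a compatible valuation. -/
structure State (α : Type) where
  base : Set (PForm α)
  val : Set α
  compat : ∀ ω ∈ base, ω.eval val

/-- `simLE S S'' S'` means `S'' ⪯_S S'` : `S'` is at least as similar to `S` as `S''` is. -/
def simLE {α : Type} (S S'' S' : State α) : Prop :=
  (S.base ∩ S''.base) ⊆ (S.base ∩ S'.base) ∧
    (symmDiff S.val S'.val) ⊆ (symmDiff S.val S''.val)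

/-- `simLT S S' S''` means `S' ≺_S S''`. -/
def simLT {α : Type} (S S' S'' : State α) : Prop :=
  simLE S S' S'' ∧ ¬ simLE S S'' S'

/-- The set of `P`-closest states to `S` relative to context `U`. -/
def Closest {α : Type} (P : Set (State α)) (S : State α) (U : Set (State α)) :
    Set (State α) :=
  {S' ∈ U | S' ∈ P ∧ ¬ ∃ S'' ∈ U, S'' ∈ P ∧ simLT S S' S''}

theorem weak_centering_valid {α : Type} (S : State α) (U : Set (State α))
    (P Q : Set (State α)) (hSU : S ∈ U)
    (hbox : ∀ S' ∈ Closest P S U, S' ∈ Q) (hSP : S ∈ P) : S ∈ Q := by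
  apply hbox S
  refine ⟨hSU, hSP, ?_⟩
  rintro ⟨S'', _, _, hLE, hnLE⟩
  exact hnLE ⟨Set.inter_subset_left.trans (by simp), by simp [symmDiff_self]⟩
end

section
/- Disjunctive antecedents: for every model (S, U), if both φ □→ χ and ψ □→ χ hold at (S, U), then (φ ∨ ψ) □→ χ holds at (S, U). -/
theorem disjunctive_antecedents {α : Type} (S : State α) (U : Set (State α))
    (P Q R : Set (State α)) (hSU : S ∈ U)
    (h₁ : ∀ S' ∈ Closest P S U, S' ∈ R) (h₂ : ∀ S' ∈ Closest Q S U, S' ∈ R) :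
    ∀ S' ∈ Closest (P ∪ Q) S U, S' ∈ R := by
  rintro S' ⟨hU, hPQ, hnd⟩
  cases hPQ with
  | inl hP =>
    exact h₁ S' ⟨hU, hP, fun ⟨S'', hU'', hP'', hlt⟩ =>
      hnd ⟨S'', hU'', Or.inl hP'', hlt⟩⟩
  | inr hQ =>
    exact h₂ S' ⟨hU, hQ, fun ⟨S'', hU'', hQ'', hlt⟩ =>
      hnd ⟨S'', hU'', Or.inr hQ'', hlt⟩⟩
end

section
/- Monotonicity under true atoms: for every model (S, U) with S = (C,V), if p ∈ V and φ □→ ψ holds at (S, U), then (φ ∧ p) □→ ψ holds at (S, U), where a state (C',V') satisfies the atom p iff p ∈ V'. -/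
theorem monotone_true_atom {α : Type} (S : State α) (U : Set (State α))
    (P Q : Set (State α)) (p : α) (hSU : S ∈ U) (hp : p ∈ S.val)
    (hbox : ∀ S' ∈ Closest P S U, S' ∈ Q) :
    ∀ S' ∈ Closest (P ∩ {T : State α | p ∈ T.val}) S U, S' ∈ Q := by
  rintro S' ⟨hU, ⟨hP, hpS'⟩, hmin⟩
  apply hbox
  refine ⟨hU, hP, ?_⟩
  rintro ⟨S'', hU'', hP'', hlt⟩
  by_cases hps : p ∈ S''.val
  · exact hmin ⟨S'', hU'', ⟨hP'', hps⟩, hlt⟩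
  · have hd : p ∈ symmDiff S.val S''.val := Or.inl ⟨hp, hps⟩
    have hd' : p ∈ symmDiff S.val S'.val := hlt.1.2 hd
    rcases hd' with ⟨_, h2⟩ | ⟨_, h2⟩
    · exact h2 hpS'
    · exact h2 hp
end

section
/- Monotonicity under false atoms: for every model (S, U) with S = (C,V), if p ∉ V and φ □→ ψ holds at (S, U), then (φ ∧ ¬p) □→ ψ holds at (S, U), where a state (C',V') satisfies ¬p iff p ∉ V'. -/
theorem monotone_false_atom {α : Type} (S : State α) (U : Set (State α))
    (P Q : Set (State α)) (p : α) (hSU : S ∈ U) (hp : p ∉ S.val)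
    (hbox : ∀ S' ∈ Closest P S U, S' ∈ Q) :
    ∀ S' ∈ Closest (P ∩ {T : State α | p ∉ T.val}) S U, S' ∈ Q := by
  intro S' hS'
  obtain ⟨hS'U, ⟨hS'P, hS'p⟩, hnd⟩ := hS'
  apply hbox
  refine ⟨hS'U, hS'P, ?_⟩
  rintro ⟨S'', hS''U, hS''P, hlt⟩
  apply hnd
  refine ⟨S'', hS''U, ⟨hS''P, ?_⟩, hlt⟩
  intro hpS''
  have hmem : p ∈ symmDiff S.val S''.val := Or.inr ⟨hpS'', hp⟩
  have := hlt.1.2 hmem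
  rcases this with ⟨h1, _⟩ | ⟨h1, _⟩
  · exact hp h1
  · exact hS'p h1
end

section
/- Monotonicity under actual causal information: for every model (S, U) with S = (C,V), if ω ∈ C and φ □→ ψ holds at (S, U), then (φ ∧ △ω) □→ ψ holds at (S, U), where a state (C',V') satisfies △ω iff ω ∈ C'. -/
theorem monotone_causal_info {α : Type} (S : State α) (U : Set (State α))
    (P Q : Set (State α)) (ω : PForm α) (hSU : S ∈ U) (hω : ω ∈ S.base)
    (hbox : ∀ S' ∈ Closest P S U, S' ∈ Q) :
    ∀ S' ∈ Closest (P ∩ {T : State α | ω ∈ T.base}) S U, S' ∈ Q := by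
  rintro S' ⟨hS'U, ⟨hS'P, hS'ω⟩, hmin⟩
  apply hbox
  refine ⟨hS'U, hS'P, ?_⟩
  rintro ⟨S'', hS''U, hS''P, hlt⟩
  exact hmin ⟨S'', hS''U, ⟨hS''P, (hlt.1.1 ⟨hω, hS'ω⟩).2⟩, hlt⟩
end

section
/- Strong centering fails: there exists a model (S, U) and a formula φ such that S satisfies φ but Closest(φ, S, U) ≠ {S}. Concretely, with U = {S, S'}, S = (∅, {p}) and S' = ({p}, {p}), the state S satisfies the atom p, yet Closest(p, S, U) = {S, S'}. -/
/-- The state `(∅, {0})`. -/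
def Sex : State ℕ :=
  ⟨∅, {0}, fun ω h => absurd h (Set.notMem_empty ω)⟩

/-- The state `({p}, {p})` with `p` the atom `0`. -/
def Sex' : State ℕ :=
  ⟨{PForm.atom 0}, {0}, by
    intro ω hω
    simp only [Set.mem_singleton_iff] at hω
    subst hω
    simp [PForm.eval]⟩


/-!
The base `∅` of `Sex` makes the base component of `⪯_Sex` trivial, and every state of the
context has valuation `{p}`, so any two of them are `⪯_Sex`-equivalent. Hence none is strictly
dominated and both `Sex` and `Sex'` are closest, although they differ in their bases.
-/

variable {α : Type}

theorem Closest_subset (P : Set (State α)) (S : State α) (U : Set (State α)) :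
    Closest P S U ⊆ U ∩ P :=
  fun _ h => ⟨h.1, h.2.1⟩

theorem mem_Closest_of_forall_simLE {P : Set (State α)} {S S' : State α} {U : Set (State α)}
    (hU : S' ∈ U) (hP : S' ∈ P) (hle : ∀ S'' ∈ U, S'' ∈ P → simLE S S'' S') :
    S' ∈ Closest P S U :=
  ⟨hU, hP, fun ⟨S'', hU'', hP'', _, hnot⟩ => hnot (hle S'' hU'' hP'')⟩

theorem Closest_eq_of_forall_simLE {P : Set (State α)} {S : State α} {U : Set (State α)}
    (hle : ∀ S' ∈ U ∩ P, ∀ S'' ∈ U ∩ P, simLE S S'' S') :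
    Closest P S U = U ∩ P :=
  (Closest_subset P S U).antisymm fun _ hS' =>
    mem_Closest_of_forall_simLE hS'.1 hS'.2 fun S'' hU'' hP'' => hle _ hS' S'' ⟨hU'', hP''⟩

theorem simLE_of_base_eq_empty {S S' S'' : State α} (hS : S.base = ∅) (hval : S'.val = S''.val) :
    simLE S S'' S' :=
  ⟨by simp [hS], by rw [hval]⟩

theorem Sex_ne_Sex' : Sex ≠ Sex' := by
  intro h
  have hbase : Sex.base = Sex'.base := congrArg State.base h
  simp [Sex, Sex'] at hbase

theorem strong_centering_fails :
    (0 : ℕ) ∈ Sex.val ∧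
    Closest {T : State ℕ | 0 ∈ T.val} Sex {Sex, Sex'} = {Sex, Sex'} ∧
    Closest {T : State ℕ | 0 ∈ T.val} Sex {Sex, Sex'} ≠ {Sex} := by
  have hval : ∀ T ∈ ({Sex, Sex'} : Set (State ℕ)), T.val = {0} := by
    rintro T (rfl | rfl) <;> rfl
  have hclosest : Closest {T : State ℕ | 0 ∈ T.val} Sex {Sex, Sex'} = {Sex, Sex'} := by
    rw [Closest_eq_of_forall_simLE fun S' hS' S'' hS'' =>
      simLE_of_base_eq_empty rfl ((hval S' hS'.1).trans (hval S'' hS''.1).symm)]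
    exact Set.inter_eq_left.mpr fun T hT => by simp [hval T hT]
  refine ⟨rfl, hclosest, ?_⟩
  rw [hclosest]
  intro h
  have hSex' : Sex' ∈ ({Sex} : Set (State ℕ)) := h ▸ Set.mem_insert_of_mem Sex rfl
  exact Sex_ne_Sex' hSex'.symm
end

section
/- Uniqueness of the post-intervention solution: let S = (C,V) be an equational state whose induced causal graph is a DAG, and let E be an intervention on a subset of the endogenous variables of S. Then there is a unique state S' = (C',V') such that C' is obtained from C by replacing the equational formulas for the intervened atoms with E, and V' agrees with V on all exogenous variables of S and on all atoms not occurring in C. -/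
/-- Atoms occurring in a propositional formula. -/
def PForm.atoms {α : Type} : PForm α → Set α
  | .atom a => {a}
  | .top => ∅
  | .neg φ => φ.atoms
  | .conj φ ψ => φ.atoms ∪ ψ.atoms
  | .biimp φ ψ => φ.atoms ∪ ψ.atoms

/-- `φ` is an equational formula for the atom `p`. -/
def IsEqFormFor {α : Type} (p : α) (φ : PForm α) : Prop :=
  ∃ ω : PForm α, φ = PForm.biimp (.atom p) ω ∧ p ∉ ω.atoms

/-- An equational state: a finite causal base of equational formulas,
with at most one equational formula per atom. -/
def IsEquationalState {α : Type} (S : State α) : Prop :=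
  S.base.Finite ∧ (∀ φ ∈ S.base, ∃ p : α, IsEqFormFor p φ) ∧
    ∀ (p : α) (ω ω' : PForm α),
      PForm.biimp (.atom p) ω ∈ S.base → PForm.biimp (.atom p) ω' ∈ S.base → ω = ω'

/-- An intervention: a finite set of formulas `p ↔ ⊤` or `p ↔ ⊥`,
with at most one formula per atom. -/
def IsIntervention {α : Type} (E : Set (PForm α)) : Prop :=
  E.Finite ∧
    (∀ φ ∈ E, ∃ p : α,
      φ = PForm.biimp (.atom p) .top ∨ φ = PForm.biimp (.atom p) (.neg .top)) ∧
    ∀ (p : α) (ω ω' : PForm α),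
      PForm.biimp (.atom p) ω ∈ E → PForm.biimp (.atom p) ω' ∈ E → ω = ω'

/-- Atoms intervened upon by `E`. -/
def intervAtoms {α : Type} (E : Set (PForm α)) : Set α :=
  {p | ∃ ω : PForm α, PForm.biimp (.atom p) ω ∈ E}

/-- The post-intervention causal base: remove all equational formulas for the
intervened atoms and add the formulas of `E`. -/
def postBase {α : Type} (C E : Set (PForm α)) : Set (PForm α) :=
  (C \ {φ | ∃ p ∈ intervAtoms E, IsEqFormFor p φ}) ∪ E

/-- Endogenous variables of a state. -/
def endo {α : Type} (S : State α) : Set α :=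
  {p | ∃ ω : PForm α, PForm.biimp (.atom p) ω ∈ S.base}

/-- Atoms occurring in the causal base of a state. -/
def baseAtoms {α : Type} (S : State α) : Set α :=
  {a | ∃ φ ∈ S.base, a ∈ φ.atoms}

/-- Exogenous variables of a state. -/
def exo {α : Type} (S : State α) : Set α := baseAtoms S \ endo S

/-- `q` is a causal parent of `p` in the causal graph of `S`. -/
def parentRel {α : Type} (S : State α) (q p : α) : Prop :=
  ∃ ω : PForm α, PForm.biimp (.atom p) ω ∈ S.base ∧ q ∈ ω.atoms

/-- The causal graph of `S` is a DAG (its edge relation is acyclic). -/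
def IsDAG {α : Type} (S : State α) : Prop :=
  ∀ p : α, ¬ Relation.TransGen (parentRel S) p p

/-!
The post-intervention base assigns to every atom at most one equation: `p ↔ ⊤` or `p ↔ ⊥` for
an intervened atom, the original `p ↔ ω` for any other endogenous atom, and for the remaining
atoms the agreement condition fixes the value to the old one. So the admissible valuations are
exactly the fixed points of a system `p ∈ V ↔ F p V` in which `F p` only reads the parents of `p`
in the original causal graph. A finite acyclic graph is well-founded, so such a system has exactly
one solution, built by well-founded recursion.
-/

lemma PForm.atoms_finite {α : Type} : ∀ φ : PForm α, φ.atoms.Finite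
  | .atom a => Set.finite_singleton a
  | .top => Set.finite_empty
  | .neg φ => φ.atoms_finite
  | .conj φ ψ => φ.atoms_finite.union ψ.atoms_finite
  | .biimp φ ψ => φ.atoms_finite.union ψ.atoms_finite

lemma PForm.eval_congr {α : Type} {V W : Set α} :
    ∀ φ : PForm α, (∀ a ∈ φ.atoms, (a ∈ V ↔ a ∈ W)) → (φ.eval V ↔ φ.eval W)
  | .atom a, h => h a rfl
  | .top, _ => Iff.rfl
  | .neg φ, h => not_congr (φ.eval_congr h)
  | .conj φ ψ, h =>
      and_congr (φ.eval_congr fun a ha => h a (Or.inl ha))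
        (ψ.eval_congr fun a ha => h a (Or.inr ha))
  | .biimp φ ψ, h =>
      iff_congr (φ.eval_congr fun a ha => h a (Or.inl ha))
        (ψ.eval_congr fun a ha => h a (Or.inr ha))

lemma State.existsUnique_of_existsUnique_val {α : Type} {B : Set (PForm α)}
    {P : Set α → Prop} (h : ∃! V : Set α, (∀ φ ∈ B, φ.eval V) ∧ P V) :
    ∃! S' : State α, S'.base = B ∧ P S'.val := by
  obtain ⟨V, ⟨hV, hP⟩, huniq⟩ := h
  refine ⟨⟨B, V, hV⟩, ⟨rfl, hP⟩, ?_⟩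
  rintro ⟨B', W, hW⟩ ⟨rfl, hPW⟩
  cases huniq W ⟨hW, hPW⟩
  rfl

lemma wellFounded_of_finite_field {α : Type} {r : α → α → Prop} {s : Set α} (hs : s.Finite)
    (hfield : ∀ a b, r a b → a ∈ s ∧ b ∈ s) (hacyc : ∀ a, ¬ Relation.TransGen r a a) :
    WellFounded r := by
  have : IsStrictOrder α (Relation.TransGen r) :=
    { irrefl := hacyc, trans := fun _ _ _ => Relation.TransGen.trans }
  exact Subrelation.wf (fun h => ⟨Relation.TransGen.single h, hfield _ _ h⟩)
    (Set.wellFoundedOn_iff.mp hs.wellFoundedOn)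

theorem WellFounded.existsUnique_fixpoint {α : Type} {r : α → α → Prop} (hr : WellFounded r)
    (F : α → Set α → Prop)
    (hF : ∀ p V W, (∀ q, r q p → (q ∈ V ↔ q ∈ W)) → (F p V ↔ F p W)) :
    ∃! V : Set α, ∀ p, p ∈ V ↔ F p V := by
  let V : Set α := {p | hr.fix (fun p rec => F p {q | ∃ h : r q p, rec q h}) p}
  have hV : ∀ p, p ∈ V ↔ F p V := fun p =>
    (iff_of_eq (hr.fix_eq _ p) : p ∈ V ↔ F p {q | ∃ _ : r q p, q ∈ V}).trans
      (hF _ _ _ fun _ hq => ⟨fun ⟨_, h⟩ => h, fun h => ⟨hq, h⟩⟩)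
  refine ⟨V, hV, fun W hW => Set.ext fun p => ?_⟩
  induction p using hr.induction with
  | _ p ih => exact (hW p).trans ((hF p W V ih).trans (hV p).symm)

section Intervention

variable {α : Type} {S : State α} {E : Set (PForm α)}

lemma baseAtoms_finite (hfin : S.base.Finite) : (baseAtoms S).Finite := by
  have : baseAtoms S = ⋃ φ ∈ S.base, φ.atoms := by
    ext a
    simp [baseAtoms]
  exact this ▸ hfin.biUnion fun φ _ => φ.atoms_finite

lemma parentRel.mem_baseAtoms {q p : α} (h : parentRel S q p) :
    q ∈ baseAtoms S ∧ p ∈ baseAtoms S := by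
  obtain ⟨ω, hω, hq⟩ := h
  exact ⟨⟨_, hω, Or.inr hq⟩, ⟨_, hω, Or.inl rfl⟩⟩

lemma wellFounded_parentRel (hfin : S.base.Finite) (hdag : IsDAG S) :
    WellFounded (parentRel S) :=
  wellFounded_of_finite_field (baseAtoms_finite hfin) (fun _ _ => parentRel.mem_baseAtoms) hdag

open Classical in
noncomputable def postEqn (S : State α) (E : Set (PForm α)) (p : α) (V : Set α) : Prop :=
  if PForm.biimp (.atom p) .top ∈ E then True
  else if PForm.biimp (.atom p) (.neg .top) ∈ E then False
  else if h : ∃ ω, PForm.biimp (.atom p) ω ∈ S.base then h.choose.eval V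
  else p ∈ S.val

lemma postEqn_congr {p : α} {V W : Set α} (h : ∀ q, parentRel S q p → (q ∈ V ↔ q ∈ W)) :
    postEqn S E p V ↔ postEqn S E p W := by
  unfold postEqn
  split_ifs with _ _ hω
  · exact Iff.rfl
  · exact Iff.rfl
  · exact hω.choose.eval_congr fun q hq => h q ⟨_, hω.choose_spec, hq⟩
  · exact Iff.rfl

lemma postEqn_of_top_mem {p : α} {V : Set α} (hp : PForm.biimp (.atom p) .top ∈ E) :
    postEqn S E p V := by
  simp [postEqn, hp]

lemma not_postEqn_of_bot_mem (hE : IsIntervention E) {p : α} {V : Set α}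
    (hp : PForm.biimp (.atom p) (.neg .top) ∈ E) : ¬ postEqn S E p V := by
  have htop : PForm.biimp (.atom p) .top ∉ E := fun h => by cases hE.2.2 p _ _ h hp
  simp [postEqn, htop, hp]

lemma postEqn_of_mem_base (hS : IsEquationalState S) {p : α} {ω : PForm α} {V : Set α}
    (hp : p ∉ intervAtoms E) (hω : PForm.biimp (.atom p) ω ∈ S.base) :
    postEqn S E p V ↔ ω.eval V := by
  have hex : ∃ ω, PForm.biimp (.atom p) ω ∈ S.base := ⟨ω, hω⟩
  have htop : PForm.biimp (.atom p) .top ∉ E := fun h => hp ⟨_, h⟩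
  have hbot : PForm.biimp (.atom p) (.neg .top) ∉ E := fun h => hp ⟨_, h⟩
  simp only [postEqn, htop, hbot, dif_pos hex, if_false]
  rw [hS.2.2 p _ _ hex.choose_spec hω]

lemma postEqn_of_not_mem_endo {p : α} {V : Set α} (hp : p ∉ intervAtoms E) (hend : p ∉ endo S) :
    postEqn S E p V ↔ p ∈ S.val := by
  have htop : PForm.biimp (.atom p) .top ∉ E := fun h => hp ⟨_, h⟩
  have hbot : PForm.biimp (.atom p) (.neg .top) ∉ E := fun h => hp ⟨_, h⟩
  simp only [postEqn, htop, hbot, if_false]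
  exact iff_of_eq (dif_neg hend)

lemma IsIntervention.mem_intervAtoms_iff (hE : IsIntervention E) {p : α} :
    p ∈ intervAtoms E ↔
      PForm.biimp (.atom p) .top ∈ E ∨ PForm.biimp (.atom p) (.neg .top) ∈ E := by
  refine ⟨fun ⟨ω, hω⟩ => ?_, fun h => h.elim (⟨_, ·⟩) (⟨_, ·⟩)⟩
  obtain ⟨p', h | h⟩ := hE.2.1 _ hω <;> cases h
  · exact Or.inl hω
  · exact Or.inr hω

lemma biimp_mem_postBase {C : Set (PForm α)} {p : α} {ω : PForm α} (hp : p ∉ intervAtoms E)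
    (hω : PForm.biimp (.atom p) ω ∈ C) : PForm.biimp (.atom p) ω ∈ postBase C E := by
  refine Or.inl ⟨hω, ?_⟩
  rintro ⟨p', hp', ω', heq, -⟩
  cases heq
  exact hp hp'

lemma mem_postBase_cases {C : Set (PForm α)} (hC : ∀ φ ∈ C, ∃ p, IsEqFormFor p φ)
    {φ : PForm α} (hφ : φ ∈ postBase C E) :
    φ ∈ E ∨ ∃ p ω, φ = PForm.biimp (.atom p) ω ∧ p ∉ intervAtoms E ∧ φ ∈ C := by
  rcases hφ with ⟨hφC, hkept⟩ | hφE
  · obtain ⟨p, ω, rfl, hpω⟩ := hC φ hφC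
    exact Or.inr ⟨p, ω, rfl, fun hp => hkept ⟨p, hp, ω, rfl, hpω⟩, hφC⟩
  · exact Or.inl hφE

lemma solves_postBase_iff (hS : IsEquationalState S) (hE : IsIntervention E)
    (hEendo : intervAtoms E ⊆ endo S) {V : Set α} :
    ((∀ φ ∈ postBase S.base E, φ.eval V) ∧
        ∀ p, (p ∈ exo S ∨ p ∉ baseAtoms S) → (p ∈ V ↔ p ∈ S.val)) ↔
      ∀ p, p ∈ V ↔ postEqn S E p V := by
  constructor
  · rintro ⟨hsat, hagree⟩ p
    by_cases hp : p ∈ intervAtoms E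
    · rcases hE.mem_intervAtoms_iff.mp hp with htop | hbot
      · exact iff_of_true ((hsat _ (Or.inr htop)).mpr trivial) (postEqn_of_top_mem htop)
      · exact iff_of_false (fun h => (hsat _ (Or.inr hbot)).mp h trivial)
          (not_postEqn_of_bot_mem hE hbot)
    by_cases hend : p ∈ endo S
    · obtain ⟨ω, hω⟩ := hend
      exact (hsat _ (biimp_mem_postBase hp hω)).trans (postEqn_of_mem_base hS hp hω).symm
    · have hfree : p ∈ exo S ∨ p ∉ baseAtoms S := by
        by_cases hb : p ∈ baseAtoms S
        exacts [Or.inl ⟨hb, hend⟩, Or.inr hb]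
      exact (hagree p hfree).trans (postEqn_of_not_mem_endo hp hend).symm
  · intro hfix
    refine ⟨fun φ hφ => ?_, fun p hfree => ?_⟩
    · rcases mem_postBase_cases hS.2.1 hφ with hφE | ⟨p, ω, rfl, hp, hω⟩
      · obtain ⟨p, rfl | rfl⟩ := hE.2.1 _ hφE
        · exact iff_of_true ((hfix p).mpr (postEqn_of_top_mem hφE)) trivial
        · exact iff_of_false (fun h => not_postEqn_of_bot_mem hE hφE ((hfix p).mp h))
            (not_not_intro trivial)
      · exact (hfix p).trans (postEqn_of_mem_base hS hp hω)
    · have hend : p ∉ endo S := by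
        rcases hfree with hexo | hb
        exacts [hexo.2, fun ⟨ω, hω⟩ => hb ⟨_, hω, Or.inl rfl⟩]
      exact (hfix p).trans (postEqn_of_not_mem_endo (fun hp => hend (hEendo hp)) hend)

end Intervention

theorem unique_post_intervention_solution {α : Type} (S : State α)
    (E : Set (PForm α)) (hS : IsEquationalState S) (hdag : IsDAG S)
    (hE : IsIntervention E) (hEendo : intervAtoms E ⊆ endo S) :
    ∃! S' : State α, S'.base = postBase S.base E ∧
      ∀ p : α, (p ∈ exo S ∨ p ∉ baseAtoms S) → (p ∈ S'.val ↔ p ∈ S.val) := by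
  have hfix := (wellFounded_parentRel hS.1 hdag).existsUnique_fixpoint (postEqn S E)
    fun _ _ _ => postEqn_congr
  exact State.existsUnique_of_existsUnique_val
    ((existsUnique_congr fun _ => solves_postBase_iff hS hE hEendo).mpr hfix)
end

section
/- Relativization for unnested counterfactuals: if a formula ψ of the counterfactual language contains no nested counterfactuals, then for any state (C,V), satisfaction of ψ in the universal context U of all states is equivalent to satisfaction of ψ in the restricted context U^Γ of states whose causal bases are subsets of Γ, where Γ = C ∪ { ω : △ω is a subformula of ψ }. -/
/-- Formulas of the counterfactual language. -/
inductive CForm (α : Type) : Type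
  | atom (p : α) : CForm α
  | delta (ω : PForm α) : CForm α
  | neg (φ : CForm α) : CForm α
  | conj (φ ψ : CForm α) : CForm α
  | cf (φ ψ : CForm α) : CForm α

/-- Satisfaction relative to a context `U`. -/
def Sat {α : Type} (U : Set (State α)) : CForm α → State α → Prop
  | .atom p, S => p ∈ S.val
  | .delta ω, S => ω ∈ S.base
  | .neg φ, S => ¬ Sat U φ S
  | .conj φ ψ, S => Sat U φ S ∧ Sat U ψ S
  | .cf φ ψ, S => ∀ S' ∈ Closest {T : State α | Sat U φ T} S U, Sat U ψ S'

/-- A formula without any counterfactual. -/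
def CfFree {α : Type} : CForm α → Prop
  | .atom _ => True
  | .delta _ => True
  | .neg φ => CfFree φ
  | .conj φ ψ => CfFree φ ∧ CfFree ψ
  | .cf _ _ => False

/-- A formula without nested counterfactuals. -/
def NoNested {α : Type} : CForm α → Prop
  | .atom _ => True
  | .delta _ => True
  | .neg φ => NoNested φ
  | .conj φ ψ => NoNested φ ∧ NoNested ψ
  | .cf φ ψ => CfFree φ ∧ CfFree ψ

/-- The propositional formulas `ω` such that `△ω` is a subformula. -/
def deltas {α : Type} : CForm α → Set (PForm α)
  | .atom _ => ∅
  | .delta ω => {ω}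
  | .neg φ => deltas φ
  | .conj φ ψ => deltas φ ∪ deltas ψ
  | .cf φ ψ => deltas φ ∪ deltas ψ

/-- Project a state's base into `Γ`, keeping the valuation. -/
def proj {α : Type} (Γ : Set (PForm α)) (T : State α) : State α :=
  ⟨T.base ∩ Γ, T.val, fun ω hω => T.compat ω hω.1⟩

lemma sat_irrel {α : Type} {φ : CForm α} (h : CfFree φ)
    (U U' : Set (State α)) (T : State α) : Sat U φ T ↔ Sat U' φ T := by
  induction φ with
  | atom p => simp [Sat]
  | delta ω => simp [Sat]
  | neg φ ih => simp only [Sat]; rw [ih h]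
  | conj φ ψ ih1 ih2 => simp only [Sat]; rw [ih1 h.1, ih2 h.2]
  | cf φ ψ _ _ => exact h.elim

lemma sat_proj {α : Type} {φ : CForm α} {Γ : Set (PForm α)} (h : CfFree φ)
    (hd : deltas φ ⊆ Γ) (U : Set (State α)) (T : State α) :
    Sat U φ (proj Γ T) ↔ Sat U φ T := by
  induction φ with
  | atom p => simp [Sat, proj]
  | delta ω =>
    simp only [Sat, proj]
    have : ω ∈ Γ := hd rfl
    exact ⟨fun h' => h'.1, fun h' => ⟨h', this⟩⟩
  | neg φ ih => simp only [Sat]; rw [ih h (fun x hx => hd hx)]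
  | conj φ ψ ih1 ih2 =>
    simp only [Sat]
    rw [ih1 h.1 (fun x hx => hd (Or.inl hx)), ih2 h.2 (fun x hx => hd (Or.inr hx))]
  | cf φ ψ _ _ => exact h.elim

lemma base_proj {α : Type} {Γ : Set (PForm α)} {S : State α} (hS : S.base ⊆ Γ)
    (T : State α) : S.base ∩ (proj Γ T).base = S.base ∩ T.base := by
  ext x
  constructor
  · rintro ⟨h1, h2, _⟩; exact ⟨h1, h2⟩
  · rintro ⟨h1, h2⟩; exact ⟨h1, h2, hS h1⟩

lemma simLE_proj_left {α : Type} {Γ : Set (PForm α)} {S : State α}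
    (hS : S.base ⊆ Γ) (T B : State α) :
    simLE S (proj Γ T) B ↔ simLE S T B := by
  unfold simLE
  rw [base_proj hS]
  rfl

lemma simLE_proj_right {α : Type} {Γ : Set (PForm α)} {S : State α}
    (hS : S.base ⊆ Γ) (T B : State α) :
    simLE S B (proj Γ T) ↔ simLE S B T := by
  unfold simLE
  rw [base_proj hS]
  rfl

lemma simLT_proj_left {α : Type} {Γ : Set (PForm α)} {S : State α}
    (hS : S.base ⊆ Γ) (T B : State α) :
    simLT S (proj Γ T) B ↔ simLT S T B := by
  unfold simLT
  rw [simLE_proj_left hS, simLE_proj_right hS]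

lemma simLT_proj_right {α : Type} {Γ : Set (PForm α)} {S : State α}
    (hS : S.base ⊆ Γ) (T B : State α) :
    simLT S B (proj Γ T) ↔ simLT S B T := by
  unfold simLT
  rw [simLE_proj_left hS, simLE_proj_right hS]

lemma relativization_main {α : Type} (ψ : CForm α) (h : NoNested ψ) (S : State α)
    (Γ : Set (PForm α)) (hS : S.base ⊆ Γ) (hd : deltas ψ ⊆ Γ) :
    Sat (Set.univ : Set (State α)) ψ S ↔ Sat {T : State α | T.base ⊆ Γ} ψ S := by
  set UΓ : Set (State α) := {T : State α | T.base ⊆ Γ} with hUΓ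
  induction ψ with
  | atom p => simp [Sat]
  | delta ω => simp [Sat]
  | neg φ ih => exact not_congr (ih h hd)
  | conj φ χ ih1 ih2 =>
    exact and_congr (ih1 h.1 (fun x hx => hd (Or.inl hx)))
      (ih2 h.2 (fun x hx => hd (Or.inr hx)))
  | cf φ χ _ _ =>
    obtain ⟨hφ, hχ⟩ := h
    have hdφ : deltas φ ⊆ Γ := fun x hx => hd (Or.inl hx)
    have hdχ : deltas χ ⊆ Γ := fun x hx => hd (Or.inr hx)
    have hPeq : {T : State α | Sat UΓ φ T} = {T : State α | Sat Set.univ φ T} := by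
      ext T; exact sat_irrel hφ UΓ Set.univ T
    simp only [Sat]
    rw [hPeq]
    set P : Set (State α) := {T : State α | Sat Set.univ φ T} with hP
    constructor
    · intro H T hT
      rw [sat_irrel hχ UΓ Set.univ]
      obtain ⟨hTU, hTP, hTmin⟩ := hT
      apply H
      refine ⟨Set.mem_univ T, hTP, ?_⟩
      rintro ⟨T'', _, hT''P, hlt⟩
      apply hTmin
      refine ⟨proj Γ T'', ?_, ?_, ?_⟩
      · exact fun x hx => hx.2
      · exact (sat_proj hφ hdφ _ T'').mpr hT''P
      · exact (simLT_proj_right hS T'' T).mpr hlt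
    · intro H T hT
      obtain ⟨_, hTP, hTmin⟩ := hT
      have hproj : proj Γ T ∈ Closest P S UΓ := by
        refine ⟨fun x hx => hx.2, (sat_proj hφ hdφ _ T).mpr hTP, ?_⟩
        rintro ⟨T'', hT''U, hT''P, hlt⟩
        apply hTmin
        exact ⟨T'', Set.mem_univ T'', hT''P, (simLT_proj_left hS T T'').mp hlt⟩
      have := H (proj Γ T) hproj
      rw [sat_irrel hχ UΓ Set.univ, sat_proj hχ hdχ] at this
      exact this

theorem relativization_unnested {α : Type} (ψ : CForm α) (S : State α)
    (h : NoNested ψ) :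
    Sat (Set.univ : Set (State α)) ψ S ↔
      Sat {T : State α | T.base ⊆ S.base ∪ deltas ψ} ψ S :=
  relativization_main ψ h S (S.base ∪ deltas ψ) Set.subset_union_left Set.subset_union_right
end
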